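/- Let μ, λ ∈ ℝ and let z be a real number with z < 0 or z > 2. Then z is an even eigenvalue of H_{μλ} if and only if Δ(μ,λ;z) = 0. -/

import Mathlib

open MeasureTheory Real Filter Topology

/-- The potential `v(0) = μ`, `v(±1) = λ/2`, `v(x) = 0` for `|x| > 1`. -/
noncomputable def pot (μ lam : ℝ) (x : ℤ) : ℝ :=
  if x = 0 then μ else if x = 1 ∨ x = -1 then lam / 2 else 0

/-- A real number `z` is an *even eigenvalue* of the discrete Schrödinger operator
`H_{μλ}` on `ℓ²(ℤ; ℂ)`, `(H_{μλ}ψ)(x) = ψ(x) − (ψ(x+1) + ψ(x−1))/2 + v(x)ψ(x)`,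
if there is a nonzero even `ψ ∈ ℓ²(ℤ; ℂ)` with `H_{μλ}ψ = zψ`. -/
def IsEvenEigenvalue (μ lam z : ℝ) : Prop :=
  ∃ ψ : lp (fun _ : ℤ => ℂ) 2, ψ ≠ 0 ∧ (∀ x : ℤ, ψ (-x) = ψ x) ∧
    ∀ x : ℤ, ψ x - (ψ (x + 1) + ψ (x - 1)) / 2 + (pot μ lam x : ℂ) * ψ x = (z : ℂ) * ψ x

/-- `a(z) = (1/2π)∫_{−π}^{π} dq/(z − 1 + cos q)`. -/
noncomputable def aF (z : ℝ) : ℝ :=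
  (2 * Real.pi)⁻¹ * ∫ q in (-Real.pi)..Real.pi, (z - 1 + Real.cos q)⁻¹

/-- `b(z) = −(1/2π)∫_{−π}^{π} cos q dq/(z − 1 + cos q)`. -/
noncomputable def bF (z : ℝ) : ℝ :=
  -((2 * Real.pi)⁻¹ * ∫ q in (-Real.pi)..Real.pi, Real.cos q / (z - 1 + Real.cos q))

/-- `c(z) = (1/2π)∫_{−π}^{π} cos² q dq/(z − 1 + cos q)`. -/
noncomputable def cF (z : ℝ) : ℝ :=
  (2 * Real.pi)⁻¹ * ∫ q in (-Real.pi)..Real.pi, (Real.cos q) ^ 2 / (z - 1 + Real.cos q)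

/-- The Fredholm determinant `Δ(μ,λ;z) = (1 − μ a(z))(1 − λ c(z)) − μλ b(z)²`. -/
noncomputable def Δdet (μ lam z : ℝ) : ℝ :=
  (1 - μ * aF z) * (1 - lam * cF z) - μ * lam * (bF z) ^ 2

/-!
Write `z - 1 = -(t + t⁻¹) / 2` with `0 < |t| < 1`, which is possible exactly when `z ∉ [0, 2]`.
For `|x| ≥ 2` the eigenvalue equation is the recurrence `ψ(x+1) + ψ(x-1) = (t + t⁻¹) ψ(x)`,
whose characteristic roots are `t` and `t⁻¹`; square summability selects the root `t`, so an
even eigenfunction is `ψ(x) = ψ(1) t^(|x|-1)` for `x ≠ 0`, and the equations at `x = 0` and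
`x = 1` have a nonzero solution exactly when `(μ - (z - 1)) (λ t + 1) = t`.

On the other side, `1 / (z - 1 + cos q)` is `2t / (t² - 1)` times the Poisson kernel
`(1 - t²) / (1 - 2t cos q + t²)`, whose integral over a period is `2π`. Hence
`a = 2t / (t² - 1)`, `b = (z - 1) a - 1`, `c = (z - 1)² a - (z - 1)`, and a computation gives
`(t² - 1) Δ = 2t (t - (μ - (z - 1)) (λ t + 1))`.
-/

open scoped ENNReal
open intervalIntegral

section Root

variable {w t : ℝ}

theorem exists_abs_lt_one_sq_add_two_mul_add_one_eq_zero (hw : 1 < |w|) :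
    ∃ t : ℝ, |t| < 1 ∧ t ^ 2 + 2 * w * t + 1 = 0 := by
  have key : ∀ w : ℝ, 1 < w → ∃ t : ℝ, |t| < 1 ∧ t ^ 2 + 2 * w * t + 1 = 0 := by
    intro w hw
    have hs : √(w ^ 2 - 1) ^ 2 = w ^ 2 - 1 := Real.sq_sqrt (by nlinarith)
    have hlt : √(w ^ 2 - 1) < w := (Real.sqrt_lt' (by linarith)).2 (by linarith)
    have hgt : w - 1 < √(w ^ 2 - 1) := (Real.lt_sqrt (by linarith)).2 (by nlinarith)
    exact ⟨√(w ^ 2 - 1) - w, abs_lt.2 ⟨by linarith, by linarith⟩, by linear_combination hs⟩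
  rcases lt_abs.1 hw with h | h
  · exact key w h
  · obtain ⟨t, ht, hwt⟩ := key (-w) h
    exact ⟨-t, by rwa [abs_neg], by linear_combination hwt⟩

theorem ne_zero_of_sq_add_two_mul_add_one_eq_zero (hwt : t ^ 2 + 2 * w * t + 1 = 0) : t ≠ 0 := by
  rintro rfl
  norm_num at hwt

theorem sq_sub_one_ne_zero_of_abs_lt_one (ht : |t| < 1) : t ^ 2 - 1 ≠ 0 :=
  (sub_neg.2 ((sq_lt_one_iff_abs_lt_one t).2 ht)).ne

end Root

section PoissonKernel

variable {w t : ℝ}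

theorem one_sub_two_mul_cos_add_sq_pos (ht : |t| < 1) (q : ℝ) :
    0 < 1 - 2 * t * cos q + t ^ 2 := by
  have h : |t * cos q| ≤ |t| := by
    rw [abs_mul]
    exact mul_le_of_le_one_right (abs_nonneg t) (abs_cos_le_one q)
  nlinarith [le_abs_self (t * cos q), sq_abs t, abs_nonneg t]

-- Unlike the substitution `u = tan (q / 2)`, this primitive is smooth on all of `ℝ`.
theorem hasDerivAt_poissonKernel_primitive (ht : |t| < 1) (q : ℝ) :
    HasDerivAt (fun q => q + 2 * arctan (t * sin q / (1 - t * cos q)))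
      ((1 - t ^ 2) / (1 - 2 * t * cos q + t ^ 2)) q := by
  have hden : 0 < 1 - t * cos q := by
    have h : |t * cos q| < 1 := by
      rw [abs_mul]
      exact (mul_le_of_le_one_right (abs_nonneg t) (abs_cos_le_one q)).trans_lt ht
    linarith [le_abs_self (t * cos q)]
  have hpos := one_sub_two_mul_cos_add_sq_pos ht q
  have hsq : 1 + (t * sin q / (1 - t * cos q)) ^ 2 =
      (1 - 2 * t * cos q + t ^ 2) / (1 - t * cos q) ^ 2 := by
    field_simp
    linear_combination t ^ 2 * sin_sq_add_cos_sq q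
  refine ((hasDerivAt_id' q).fun_add ((((hasDerivAt_sin q).const_mul t).fun_div
    (((hasDerivAt_cos q).const_mul t).const_sub 1) hden.ne').arctan.const_mul 2)).congr_deriv ?_
  rw [hsq]
  field_simp
  linear_combination (-2 * t ^ 2) * sin_sq_add_cos_sq q

theorem integral_poissonKernel (ht : |t| < 1) :
    ∫ q in (-π)..π, (1 - t ^ 2) / (1 - 2 * t * cos q + t ^ 2) = 2 * π := by
  rw [integral_eq_sub_of_hasDerivAt (fun q _ => hasDerivAt_poissonKernel_primitive ht q)
    ((continuous_const.div (by fun_prop)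
      fun q => (one_sub_two_mul_cos_add_sq_pos ht q).ne').intervalIntegrable _ _)]
  simp only [sin_pi, sin_neg, neg_zero, mul_zero, zero_div, arctan_zero, add_zero]
  ring

theorem add_cos_eq_div (hwt : t ^ 2 + 2 * w * t + 1 = 0) (q : ℝ) :
    w + cos q = -(1 - 2 * t * cos q + t ^ 2) / (2 * t) := by
  have ht0 := ne_zero_of_sq_add_two_mul_add_one_eq_zero hwt
  field_simp
  linear_combination hwt

theorem add_cos_ne_zero (ht : |t| < 1) (hwt : t ^ 2 + 2 * w * t + 1 = 0) (q : ℝ) :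
    w + cos q ≠ 0 := by
  have ht0 := ne_zero_of_sq_add_two_mul_add_one_eq_zero hwt
  rw [add_cos_eq_div hwt]
  exact div_ne_zero (neg_ne_zero.2 (one_sub_two_mul_cos_add_sq_pos ht q).ne') (by positivity)

theorem integral_inv_add_cos (ht : |t| < 1) (hwt : t ^ 2 + 2 * w * t + 1 = 0) :
    ∫ q in (-π)..π, (w + cos q)⁻¹ = 4 * π * t / (t ^ 2 - 1) := by
  have ht0 := ne_zero_of_sq_add_two_mul_add_one_eq_zero hwt
  have ht1 := sq_sub_one_ne_zero_of_abs_lt_one ht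
  have hker : ∀ q, (w + cos q)⁻¹ =
      2 * t / (t ^ 2 - 1) * ((1 - t ^ 2) / (1 - 2 * t * cos q + t ^ 2)) := fun q => by
    rw [add_cos_eq_div hwt]
    field_simp [(one_sub_two_mul_cos_add_sq_pos ht q).ne']
    ring
  simp_rw [hker, intervalIntegral.integral_const_mul, integral_poissonKernel ht]
  ring

end PoissonKernel

section Coefficients

variable {z t : ℝ}

theorem aF_eq (ht : |t| < 1) (hzt : t ^ 2 + 2 * (z - 1) * t + 1 = 0) :
    aF z = 2 * t / (t ^ 2 - 1) := by
  rw [aF, integral_inv_add_cos ht hzt]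
  field_simp
  ring

theorem intervalIntegrable_inv_sub_one_add_cos (hz : ∀ q, z - 1 + cos q ≠ 0) (a b : ℝ) :
    IntervalIntegrable (fun q => (z - 1 + cos q)⁻¹) volume a b :=
  ((continuous_const.add continuous_cos).inv₀ hz).intervalIntegrable a b

theorem bF_eq (hz : ∀ q, z - 1 + cos q ≠ 0) : bF z = (z - 1) * aF z - 1 := by
  have h : ∀ q, cos q / (z - 1 + cos q) = 1 - (z - 1) * (z - 1 + cos q)⁻¹ := fun q => by
    field_simp [hz q]
    ring
  simp_rw [bF, aF, h]
  rw [integral_sub intervalIntegrable_const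
    ((intervalIntegrable_inv_sub_one_add_cos hz _ _).const_mul _),
    intervalIntegral.integral_const_mul, intervalIntegral.integral_const]
  field_simp
  ring

theorem cF_eq (hz : ∀ q, z - 1 + cos q ≠ 0) : cF z = (z - 1) ^ 2 * aF z - (z - 1) := by
  have h : ∀ q, cos q ^ 2 / (z - 1 + cos q) =
      cos q - (z - 1) + (z - 1) ^ 2 * (z - 1 + cos q)⁻¹ := fun q => by
    field_simp [hz q]
    ring
  simp_rw [cF, aF, h]
  rw [integral_add ((by fun_prop : Continuous fun q => cos q - (z - 1)).intervalIntegrable _ _)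
    ((intervalIntegrable_inv_sub_one_add_cos hz _ _).const_mul _),
    integral_sub (continuous_cos.intervalIntegrable _ _) intervalIntegrable_const,
    intervalIntegral.integral_const_mul, integral_cos, intervalIntegral.integral_const,
    sin_neg, sin_pi, neg_zero, sub_zero]
  field_simp
  ring

theorem Δdet_eq_zero_iff {μ lam : ℝ} (ht : |t| < 1) (hzt : t ^ 2 + 2 * (z - 1) * t + 1 = 0) :
    Δdet μ lam z = 0 ↔ (μ - (z - 1)) * (lam * t + 1) = t := by
  have hcos := add_cos_ne_zero ht hzt
  have ht0 := ne_zero_of_sq_add_two_mul_add_one_eq_zero hzt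
  have ht1 := sq_sub_one_ne_zero_of_abs_lt_one ht
  have hw : z - 1 = -(t ^ 2 + 1) / (2 * t) := by
    field_simp
    linear_combination hzt
  have key : (t ^ 2 - 1) * Δdet μ lam z = 2 * t * (t - (μ - (z - 1)) * (lam * t + 1)) := by
    rw [Δdet, bF_eq hcos, cF_eq hcos, aF_eq ht hzt, hw]
    field_simp
    ring
  rw [← mul_eq_zero_iff_left ht1, key, mul_eq_zero_iff_left (by positivity), sub_eq_zero, eq_comm]

end Coefficients

theorem Memℓp.tendsto_cofinite_zero {α E : Type*} [NormedAddCommGroup E] {f : α → E}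
    {p : ℝ≥0∞} (hf : Memℓp f p) (hp : 0 < p.toReal) : Tendsto f cofinite (𝓝 0) := by
  rw [tendsto_zero_iff_norm_tendsto_zero]
  have h := (hf.summable hp).tendsto_cofinite_zero.rpow_const (p := p.toReal⁻¹)
    (Or.inr (by positivity))
  rw [Real.zero_rpow (inv_ne_zero hp.ne')] at h
  exact h.congr fun i => Real.rpow_rpow_inv (norm_nonneg _) hp.ne'

theorem memℓp_pow_natAbs {𝕜 : Type*} [NormedField 𝕜] {r : 𝕜} (hr : ‖r‖ < 1) {p : ℝ≥0∞}
    (hp : 0 < p.toReal) : Memℓp (fun x : ℤ => r ^ x.natAbs) p := by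
  apply memℓp_gen
  have hgeom : Summable fun n : ℕ => (‖r‖ ^ p.toReal) ^ n :=
    summable_geometric_of_lt_one (by positivity) (Real.rpow_lt_one (norm_nonneg r) hr hp)
  have h : ∀ x : ℤ, ‖r ^ x.natAbs‖ ^ p.toReal = (‖r‖ ^ p.toReal) ^ x.natAbs := fun x => by
    rw [norm_pow, ← Real.rpow_natCast, ← Real.rpow_mul (norm_nonneg _), mul_comm,
      Real.rpow_mul (norm_nonneg _), Real.rpow_natCast]
  simp_rw [h]
  exact Summable.of_nat_of_neg (by simpa using hgeom) (by simpa using hgeom)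

theorem eq_mul_pow_of_tendsto_zero {𝕜 : Type*} [NormedField 𝕜] {t r : 𝕜} (hr : 1 ≤ ‖r‖)
    {u : ℕ → 𝕜} (hu : ∀ n, u (n + 2) = (t + r) * u (n + 1) - t * r * u n)
    (hlim : Tendsto u atTop (𝓝 0)) (n : ℕ) : u n = u 0 * t ^ n := by
  have hv : ∀ n, u (n + 1) - t * u n = (u 1 - t * u 0) * r ^ n := by
    intro n
    induction n with
    | zero => simp
    | succ n ih => rw [hu, pow_succ]; linear_combination r * ih
  have hvlim : Tendsto (fun n => (u 1 - t * u 0) * r ^ n) atTop (𝓝 0) := by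
    have h := (hlim.comp (tendsto_add_atTop_nat 1)).sub (hlim.const_mul t)
    rw [mul_zero, sub_zero] at h
    exact h.congr hv
  have hv0 : u 1 - t * u 0 = 0 := by
    refine norm_le_zero_iff.1 (ge_of_tendsto' (by simpa using hvlim.norm) fun n => ?_)
    exact le_mul_of_one_le_right (norm_nonneg _) (one_le_pow₀ hr)
  induction n with
  | zero => simp
  | succ n ih =>
    have h := hv n
    rw [hv0, zero_mul, sub_eq_zero] at h
    rw [h, ih, pow_succ]
    ring

section Potential

variable (μ lam : ℝ)

theorem pot_zero : pot μ lam 0 = μ := by simp [pot]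

theorem pot_one : pot μ lam 1 = lam / 2 := by simp [pot]

theorem pot_neg_one : pot μ lam (-1) = lam / 2 := by simp [pot]

theorem pot_of_two_le_natAbs {x : ℤ} (hx : 2 ≤ x.natAbs) : pot μ lam x = 0 := by
  rw [pot, if_neg (by omega), if_neg (by omega)]

end Potential

section EvenEigenfunctions

variable {μ lam z t : ℝ}

theorem apply_natCast_add_one_eq_mul_pow (ht : |t| < 1) (hzt : t ^ 2 + 2 * (z - 1) * t + 1 = 0)
    {ψ : lp (fun _ : ℤ => ℂ) 2}
    (heq : ∀ x : ℤ, ψ x - (ψ (x + 1) + ψ (x - 1)) / 2 + (pot μ lam x : ℂ) * ψ x = z * ψ x)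
    (n : ℕ) : ψ ((n : ℤ) + 1) = ψ 1 * (t : ℂ) ^ n := by
  have ht0 : (t : ℂ) ≠ 0 := by exact_mod_cast ne_zero_of_sq_add_two_mul_add_one_eq_zero hzt
  have htC : (t : ℂ) ^ 2 + 2 * ((z : ℂ) - 1) * t + 1 = 0 := by exact_mod_cast hzt
  have hdecay : Tendsto (fun n : ℕ => ψ ((n : ℤ) + 1)) atTop (𝓝 0) := by
    have hinj : Function.Injective fun n : ℕ => (n : ℤ) + 1 := fun m n h => by simpa using h
    rw [← Nat.cofinite_eq_atTop]
    exact ((lp.memℓp ψ).tendsto_cofinite_zero (by norm_num)).comp hinj.tendsto_cofinite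
  have hinv : 1 ≤ ‖(t : ℂ)⁻¹‖ := by
    rw [norm_inv, Complex.norm_real, Real.norm_eq_abs]
    exact one_le_inv_iff₀.2 ⟨abs_pos.2 (by exact_mod_cast ht0), ht.le⟩
  refine (eq_mul_pow_of_tendsto_zero (t := (t : ℂ)) hinv (fun n => ?_) hdecay n).trans (by simp)
  have h := heq ((n : ℤ) + 2)
  rw [pot_of_two_le_natAbs μ lam (by omega)] at h
  push_cast at h ⊢
  rw [show (n : ℤ) + 2 + 1 = n + 1 + 1 + 1 by ring, show (n : ℤ) + 2 - 1 = n + 1 by ring,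
    show (n : ℤ) + 2 = n + 1 + 1 by ring] at h
  field_simp
  linear_combination (-2 * t) * h - ψ ((n : ℤ) + 1 + 1) * htC

theorem eq_of_isEvenEigenvalue (ht : |t| < 1) (hzt : t ^ 2 + 2 * (z - 1) * t + 1 = 0)
    (h : IsEvenEigenvalue μ lam z) : (μ - (z - 1)) * (lam * t + 1) = t := by
  obtain ⟨ψ, hψ, heven, heq⟩ := h
  have htC : (t : ℂ) ^ 2 + 2 * ((z : ℂ) - 1) * t + 1 = 0 := by exact_mod_cast hzt
  have hgeom := apply_natCast_add_one_eq_mul_pow ht hzt heq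
  have h0 := heq 0
  have h1 := heq 1
  rw [pot_zero, zero_add, zero_sub, heven 1] at h0
  rw [pot_one, show (1 : ℤ) + 1 = (1 : ℕ) + 1 by norm_num, hgeom 1, sub_self] at h1
  push_cast at h0 h1
  have hψ1 : ψ 1 = (μ - (z - 1)) * ψ 0 := by linear_combination -h0
  have hψ0 : t * ψ 0 = (lam * t + 1) * ψ 1 := by linear_combination (-2 * t) * h1 - ψ 1 * htC
  have hψ0_ne : ψ 0 ≠ 0 := by
    intro hψ0_eq
    have hnat : ∀ n : ℕ, ψ n = 0 := by
      rintro (_ | n)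
      · exact hψ0_eq
      · rw [Nat.cast_succ, hgeom, hψ1, hψ0_eq]; ring
    refine hψ (lp.ext (funext fun x => ?_))
    obtain ⟨n, rfl | rfl⟩ := x.eq_nat_or_neg
    · exact hnat n
    · rw [heven]; exact hnat n
  have hC : ((μ - (z - 1)) * (lam * t + 1) : ℂ) = t :=
    mul_right_cancel₀ hψ0_ne (by linear_combination -(lam * t + 1) * hψ1 - hψ0)
  exact_mod_cast hC

theorem isEvenEigenvalue_of_eq (ht : |t| < 1) (hzt : t ^ 2 + 2 * (z - 1) * t + 1 = 0)
    (h : (μ - (z - 1)) * (lam * t + 1) = t) : IsEvenEigenvalue μ lam z := by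
  have ht0 : (t : ℂ) ≠ 0 := by exact_mod_cast ne_zero_of_sq_add_two_mul_add_one_eq_zero hzt
  have htC : (t : ℂ) ^ 2 + 2 * ((z : ℂ) - 1) * t + 1 = 0 := by exact_mod_cast hzt
  have hC : ((μ - (z - 1)) * (lam * t + 1) : ℂ) = t := by exact_mod_cast h
  set B : ℂ := μ - (z - 1)
  let G : lp (fun _ : ℤ => ℂ) 2 :=
    ⟨fun x => (t : ℂ) ^ x.natAbs, memℓp_pow_natAbs (by simpa using ht) (by norm_num)⟩
  let ψ := B • G + lp.single 2 0 ((t : ℂ) - B)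
  have hψ : ∀ x, ψ x = if x = 0 then (t : ℂ) else B * t ^ x.natAbs := by
    intro x
    simp only [ψ, lp.coeFn_add, lp.coeFn_smul, lp.coeFn_single, Pi.add_apply, Pi.smul_apply,
      smul_eq_mul]
    split_ifs with hx
    · subst hx; simp [G]
    · simp [G, hx]
  refine ⟨ψ, fun h0 => ht0 ?_, fun x => by simp [hψ], fun x => ?_⟩
  · simpa [hψ] using congrArg (fun φ : lp (fun _ : ℤ => ℂ) 2 => φ 0) h0
  simp only [hψ]
  obtain rfl | rfl | rfl | hx : x = 0 ∨ x = 1 ∨ x = -1 ∨ 2 ≤ x.natAbs := by omega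
  · norm_num [pot_zero]
    ring
  · norm_num [pot_one]
    linear_combination (1 / 2 : ℂ) * hC - B / 2 * htC
  · norm_num [pot_neg_one]
    linear_combination (1 / 2 : ℂ) * hC - B / 2 * htC
  · obtain ⟨m, hm⟩ : ∃ m, x.natAbs = m + 2 := ⟨x.natAbs - 2, by omega⟩
    rw [if_neg (by omega), if_neg (by omega), if_neg (by omega), pot_of_two_le_natAbs μ lam hx,
      Complex.ofReal_zero, hm]
    obtain ⟨h₁, h₂⟩ | ⟨h₁, h₂⟩ : (x + 1).natAbs = m + 3 ∧ (x - 1).natAbs = m + 1 ∨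
        (x + 1).natAbs = m + 1 ∧ (x - 1).natAbs = m + 3 := by omega
    all_goals
      rw [h₁, h₂]
      linear_combination -(B * t ^ (m + 1) / 2) * htC

end EvenEigenfunctions

/-- For `μ, λ ∈ ℝ` and real `z` with `z < 0` or `z > 2`: `z` is an even eigenvalue of
`H_{μλ}` if and only if `Δ(μ,λ;z) = 0`. -/
theorem isEvenEigenvalue_iff_det_eq_zero (μ lam z : ℝ) (hz : z < 0 ∨ 2 < z) :
    IsEvenEigenvalue μ lam z ↔ Δdet μ lam z = 0 := by
  have hw : 1 < |z - 1| := lt_abs.2 (by rcases hz with h | h <;> [right; left] <;> linarith)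
  obtain ⟨t, ht, hzt⟩ := exists_abs_lt_one_sq_add_two_mul_add_one_eq_zero hw
  rw [Δdet_eq_zero_iff ht hzt]
  exact ⟨eq_of_isEvenEigenvalue ht hzt, isEvenEigenvalue_of_eq ht hzt⟩
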